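/- arXiv:1709.06432 — 5 statements merged into one kernel-verified Lean document; each statement's English description precedes it below -/
import Mathlib

section
/- Let p be a prime, e a nonnegative integer, and B(X), R(X) polynomials over F_p with B monic of degree e and deg(R) < e. Let u be a positive integer and K a nonnegative integer. Consider the integers n with K·p^{u+e} ≤ n < (K+1)·p^{u+e}, each identified with its associated polynomial n(X) over F_p (coefficients being the base-p digits of n). Then the set of such polynomials n(X) satisfying n(X) ≡ R(X) (mod B(X)) is exactly {(r(X) + X^u·C(X))·B(X) + R(X) : deg(r) < u}, for some fixed polynomial C(X) depending only on K, B, R, u (with r ranging over all polynomials of degree less than u). -/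
open scoped Classical ENNReal
open Polynomial

noncomputable section

namespace KH

/-- The field `F_p((X⁻¹))` of formal Laurent series in `X⁻¹` over `ZMod p`,
modeled as Hahn series over `ℤ`: the coefficient at `i : ℤ` is the coefficient of `X^{-i}`. -/
abbrev LS (p : ℕ) := HahnSeries ℤ (ZMod p)

/-- The element `X` of `F_p((X⁻¹))` (exponent `-1` in `X⁻¹`). -/
def Xls (p : ℕ) : LS p := HahnSeries.single (-1 : ℤ) 1

/-- `ν(L) = -w` where `w` is the order of `L` (`ν(0) = 0` by convention). -/
def nu {p : ℕ} (L : LS p) : ℤ := -(HahnSeries.order L)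

/-- Embedding of polynomials `F_p[X] → F_p((X⁻¹))`, sending `X` to `Xls`. -/
def P2L (p : ℕ) [Fact p.Prime] : Polynomial (ZMod p) →+* LS p :=
  (Polynomial.aeval (Xls p)).toRingHom

/-- The fractional part `{L} = ∑_{i ≥ 1} a_i X^{-i}`. -/
def frac {p : ℕ} (L : LS p) : LS p where
  coeff i := if 1 ≤ i then L.coeff i else 0
  isPWO_support' := L.isPWO_support'.mono (by
    intro i hi
    by_cases h : (1:ℤ) ≤ i <;> simp [HahnSeries.support, h] at hi ⊢ <;> tauto)

/-- Continued fraction remainders: `cfRem L 0 = L`, `cfRem L (n+1) = 1/{cfRem L n}`. -/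
def cfRem {p : ℕ} [Fact p.Prime] (L : LS p) : ℕ → LS p
  | 0 => L
  | n + 1 => (frac (cfRem L n))⁻¹

/-- The `n`-th continued fraction partial quotient of `L` (as a Laurent series; it is the
polynomial part of the `n`-th remainder). -/
def cfA {p : ℕ} [Fact p.Prime] (L : LS p) (n : ℕ) : LS p :=
  cfRem L n - frac (cfRem L n)

/-- The degree of the `n`-th partial quotient. -/
def degA {p : ℕ} [Fact p.Prime] (L : LS p) (n : ℕ) : ℤ := nu (cfA L n)

/-- Denominators `Q_h` of the convergents of `L`. -/
def cfQ {p : ℕ} [Fact p.Prime] (L : LS p) : ℕ → LS p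
  | 0 => 1
  | 1 => cfA L 1
  | n + 2 => cfA L (n + 2) * cfQ L (n + 1) + cfQ L n

/-- Numerators `P_h` of the convergents of `L`. -/
def cfP {p : ℕ} [Fact p.Prime] (L : LS p) : ℕ → LS p
  | 0 => cfA L 0
  | 1 => cfA L 1 * cfA L 0 + 1
  | n + 2 => cfA L (n + 2) * cfP L (n + 1) + cfP L n

/-- `d_h = deg Q_h`. -/
def dQ {p : ℕ} [Fact p.Prime] (L : LS p) (h : ℕ) : ℤ := nu (cfQ L h)

/-- Evaluation at `X = p` of (the fractional part of) a Laurent series: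
`∑_{i ≥ 1} a_i p^{-i}` with digits `a_i ∈ {0, …, p-1}`. -/
def evalAtP {p : ℕ} (L : LS p) : ℝ :=
  ∑' i : ℕ, ((L.coeff ((i : ℤ) + 1)).val : ℝ) / (p : ℝ) ^ (i + 1)

/-- The polynomial over `F_p` associated with `n ∈ ℕ`, whose coefficients are the
base-`p` digits of `n`. -/
def nPoly (p : ℕ) (n : ℕ) : Polynomial (ZMod p) :=
  ∑ i ∈ Finset.range (n + 1), Polynomial.C ((n / p ^ i % p : ℕ) : ZMod p) * Polynomial.X ^ i

/-- The `n`-th point of the digital Kronecker sequence associated with `L`. -/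
def kron (p : ℕ) [Fact p.Prime] (L : LS p) (n : ℕ) : ℝ :=
  evalAtP (frac (P2L p (nPoly p n) * L))

/-- The `i`-th digit of `n(X)` in base `b(X)`. -/
def haltonDigit (p : ℕ) [Fact p.Prime] (b : Polynomial (ZMod p)) (n i : ℕ) :
    Polynomial (ZMod p) :=
  (nPoly p n /ₘ b ^ i) %ₘ b

/-- Evaluation of a polynomial over `F_p` at `p` (digits in `{0,…,p-1}`). -/
def polyEvalNat (p : ℕ) (a : Polynomial (ZMod p)) : ℕ :=
  ∑ i ∈ Finset.range (a.natDegree + 1), (a.coeff i).val * p ^ i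

/-- The `n`-th point of the van der Corput sequence in base `b(X)` over `F_p`. -/
def vdc (p : ℕ) [Fact p.Prime] (b : Polynomial (ZMod p)) (n : ℕ) : ℝ :=
  ∑' i : ℕ, (polyEvalNat p (haltonDigit p b n i) : ℝ) / (p : ℝ) ^ (b.natDegree * (i + 1))

/-- Number of indices `n < N` with `z n` in the box `∏ [a i, b i)`. -/
def countIn (d : ℕ) (z : ℕ → Fin d → ℝ) (N : ℕ) (a b : Fin d → ℝ) : ℕ :=
  ((Finset.range N).filter fun n => ∀ i, a i ≤ z n i ∧ z n i < b i).card

/-- The (extreme) discrepancy of the first `N` points of `z` in `[0,1)^d`. -/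
def disc (d : ℕ) (z : ℕ → Fin d → ℝ) (N : ℕ) : ℝ :=
  sSup { r | ∃ a b : Fin d → ℝ, (∀ i, 0 ≤ a i ∧ a i ≤ b i ∧ b i ≤ 1) ∧
    r = |(countIn d z N a b : ℝ) / N - ∏ i, (b i - a i)| }

/-- The star discrepancy of the first `N` points of `z` in `[0,1)^d`. -/
def starDisc (d : ℕ) (z : ℕ → Fin d → ℝ) (N : ℕ) : ℝ :=
  sSup { r | ∃ b : Fin d → ℝ, (∀ i, 0 < b i ∧ b i ≤ 1) ∧
    r = |(countIn d z N (fun _ => 0) b : ℝ) / N - ∏ i, b i| }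

/-- The Laurent series `∑_{i ≥ 1} a_{i-1} X^{-i}` associated with a coefficient
sequence `a : ℕ → ZMod p`; this identifies `H = {L : ν(L) < 0}` with `ℕ → ZMod p`. -/
def toLS (p : ℕ) (a : ℕ → ZMod p) : LS p where
  coeff i := if h : 1 ≤ i then a (i - 1).toNat else 0
  isPWO_support' := by
    have : BddBelow {i : ℤ | (if h : 1 ≤ i then a (i - 1).toNat else 0) ≠ 0} := by
      refine ⟨1, fun i hi => ?_⟩
      by_cases h : (1:ℤ) ≤ i
      · exact h
      · simp [h] at hi
    exact (Set.isPWO_iff_isWF.mpr this.wellFoundedOn_lt)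

instance : MeasurableSpace (ZMod p) := ⊤

/-- A `(t, m, s)`-net in base `p`. -/
def IsNet (p t m s : ℕ) (P : Fin (p ^ m) → Fin s → ℝ) : Prop :=
  t ≤ m ∧ ∀ (d a : Fin s → ℕ), (∑ i, d i) = m - t → (∀ i, a i < p ^ d i) →
    (Finset.univ.filter fun n => ∀ i,
      (a i : ℝ) / (p : ℝ) ^ d i ≤ P n i ∧ P n i < ((a i : ℝ) + 1) / (p : ℝ) ^ d i).card = p ^ t

/-- A `(t, s)`-sequence in base `p`. -/
def IsTSeq (p t s : ℕ) (z : ℕ → Fin s → ℝ) : Prop :=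
  ∀ m k : ℕ, t < m → IsNet p t m s fun n => z (k * p ^ m + (n : ℕ))

/-! Since `n ↦ n(X)` reads base-`p` digits, it maps `[K p^N, (K+1) p^N)` bijectively onto
`X^N K(X) + {f : deg f < N}`. Writing `X^e K(X) = S + B C` with `deg S < e`, a polynomial
`B t + R` lies in `X^(u+e) K(X) + {deg < u+e}` iff `B (t - X^u C) + (R - X^u S)` has degree
`< u + e`, i.e. iff `deg (t - X^u C) < u`. -/

section Digits

variable {p : ℕ}

@[simp]
lemma nPoly_zero : nPoly p 0 = 0 := by
  simp [nPoly]

lemma coeff_nPoly (hp : 1 < p) (n i : ℕ) :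
    (nPoly p n).coeff i = ((n / p ^ i % p : ℕ) : ZMod p) := by
  simp only [nPoly, finsetSum_coeff, coeff_C_mul, coeff_X_pow, mul_ite, mul_one, mul_zero,
    Finset.sum_ite_eq, Finset.mem_range]
  split_ifs with hi
  · rfl
  · have : n < p ^ i := (Nat.lt_pow_self hp).trans_le (Nat.pow_le_pow_right (by omega) (by omega))
    simp [Nat.div_eq_of_lt this]

lemma degree_nPoly_lt (hp : 1 < p) {N m : ℕ} (hm : m < p ^ N) : (nPoly p m).degree < N := by
  refine (degree_lt_iff_coeff_zero _ _).2 fun i hi => ?_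
  have : m < p ^ i := hm.trans_le (Nat.pow_le_pow_right (by omega) hi)
  simp [coeff_nPoly hp, Nat.div_eq_of_lt this]

lemma nPoly_add_mul (hp : 1 < p) {a : ℕ} (ha : a < p) (m : ℕ) :
    nPoly p (a + p * m) = C (a : ZMod p) + X * nPoly p m := by
  ext (_ | i)
  · simp [coeff_nPoly hp, Nat.add_mul_mod_self_left, Nat.mod_eq_of_lt ha]
  · have : (a + p * m) / p = m := by
      rw [Nat.add_mul_div_left _ _ (by omega), Nat.div_eq_of_lt ha, zero_add]
    simp [coeff_nPoly hp, pow_succ', ← Nat.div_div_eq_div_mul, this]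

lemma nPoly_mul_pow_add (hp : 1 < p) (K : ℕ) :
    ∀ {N m : ℕ}, m < p ^ N → nPoly p (K * p ^ N + m) = nPoly p m + X ^ N * nPoly p K
  | 0, m, hm => by
    obtain rfl : m = 0 := by simpa using hm
    simp
  | N + 1, m, hm => by
    have hdiv : m / p < p ^ N := Nat.div_lt_of_lt_mul (by rwa [← pow_succ'])
    have hmod : m % p < p := Nat.mod_lt _ (by omega)
    have hsplit : K * p ^ (N + 1) + m = m % p + p * (K * p ^ N + m / p) := by
      conv_lhs => rw [← Nat.mod_add_div m p]
      ring
    rw [hsplit, nPoly_add_mul hp hmod, nPoly_mul_pow_add hp K hdiv,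
      ← Nat.mod_add_div m p, nPoly_add_mul hp hmod, Nat.mod_add_div m p]
    ring

lemma exists_nPoly_eq (hp : 1 < p) :
    ∀ {N : ℕ} {f : (ZMod p)[X]}, f.degree < N → ∃ m < p ^ N, nPoly p m = f
  | 0, f, hf => ⟨0, by simp, by rw [nPoly_zero, eq_comm, ← degree_eq_bot]; simpa using hf⟩
  | N + 1, f, hf => by
    have : NeZero p := ⟨by omega⟩
    have hdivX : f.divX.degree < N := by
      rw [degree_lt_iff_coeff_zero] at hf ⊢
      exact fun i hi => by rw [coeff_divX, hf _ (by omega)]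
    obtain ⟨m, hm, hmf⟩ := exists_nPoly_eq hp hdivX
    have ha : (f.coeff 0).val < p := ZMod.val_lt _
    refine ⟨(f.coeff 0).val + p * m, ?_, ?_⟩
    · calc (f.coeff 0).val + p * m < p * (m + 1) := by linarith
        _ ≤ p ^ (N + 1) := by rw [pow_succ']; exact Nat.mul_le_mul_left _ hm
    · rw [nPoly_add_mul hp ha, hmf, ZMod.natCast_zmod_val, add_comm, X_mul_divX_add]

lemma image_nPoly_Ico (hp : 1 < p) (K N : ℕ) :
    nPoly p '' {n | K * p ^ N ≤ n ∧ n < (K + 1) * p ^ N} =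
      {q : (ZMod p)[X] | (q - X ^ N * nPoly p K).degree < (N : WithBot ℕ)} := by
  ext q
  constructor
  · rintro ⟨n, ⟨hlo, hhi⟩, rfl⟩
    obtain ⟨m, rfl⟩ := Nat.exists_eq_add_of_le hlo
    have hm : m < p ^ N := by linarith
    simpa [nPoly_mul_pow_add hp K hm] using degree_nPoly_lt hp hm
  · intro hq
    obtain ⟨m, hm, hmq⟩ := exists_nPoly_eq hp hq
    refine ⟨K * p ^ N + m, ⟨by omega, by linarith⟩, ?_⟩
    rw [nPoly_mul_pow_add hp K hm, hmq, sub_add_cancel]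

end Digits

section Congruence

variable {A : Type*} [CommRing A] [Nontrivial A] {B : A[X]} {e : ℕ}

lemma _root_.Polynomial.Monic.degree_mul_lt_add_iff (hB : B.Monic) (hBe : B.natDegree = e)
    (f : A[X]) (u : ℕ) :
    (B * f).degree < ((u + e : ℕ) : WithBot ℕ) ↔ f.degree < (u : WithBot ℕ) := by
  rw [mul_comm, hB.degree_mul, degree_eq_natDegree hB.ne_zero, hBe, Nat.cast_add,
    WithBot.add_lt_add_iff_right (z := (e : WithBot ℕ)) (WithBot.natCast_ne_bot e)]

lemma degree_mul_add_sub_X_pow_mul_lt_iff (hB : B.Monic) (hBe : B.natDegree = e) {R : A[X]}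
    (hR : R.degree < e) (P t : A[X]) (u : ℕ) :
    (B * t + R - X ^ (u + e) * P).degree < ((u + e : ℕ) : WithBot ℕ) ↔
      (t - X ^ u * ((X ^ e * P) /ₘ B)).degree < (u : WithBot ℕ) := by
  set C := (X ^ e * P) /ₘ B
  set S := (X ^ e * P) %ₘ B
  have hdecomp : B * t + R - X ^ (u + e) * P = B * (t - X ^ u * C) + (R - X ^ u * S) := by
    linear_combination X ^ u * modByMonic_add_div (X ^ e * P) B
  have hS : S.degree < e := by
    simpa [degree_eq_natDegree hB.ne_zero, hBe] using degree_modByMonic_lt (X ^ e * P) hB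
  have hrest : R - X ^ u * S ∈ degreeLT A (u + e) := by
    refine (degreeLT A (u + e)).sub_mem (mem_degreeLT.2 ?_) (mem_degreeLT.2 ?_)
    · exact hR.trans_le (by exact_mod_cast Nat.le_add_left e u)
    · rw [mul_comm, degree_mul_X_pow, Nat.cast_add, add_comm (u : WithBot ℕ)]
      exact WithBot.add_lt_add_right WithBot.coe_ne_bot hS
  rw [← mem_degreeLT, hdecomp, Submodule.add_mem_iff_left _ hrest, mem_degreeLT,
    hB.degree_mul_lt_add_iff hBe]

end Congruence

theorem statement0_general (p : ℕ) [Fact p.Prime] (e : ℕ) (B R : Polynomial (ZMod p))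
    (hB : B.Monic) (hBe : B.natDegree = e) (hR : R.degree < (e : ℕ))
    (u : ℕ) (K : ℕ) :
    ∃ C : Polynomial (ZMod p),
      (nPoly p '' {n : ℕ | K * p ^ (u + e) ≤ n ∧ n < (K + 1) * p ^ (u + e) ∧
          B ∣ (nPoly p n - R)})
        = {q : Polynomial (ZMod p) | ∃ r : Polynomial (ZMod p), r.degree < (u : ℕ) ∧
            q = (r + Polynomial.X ^ u * C) * B + R} := by
  have hp : 1 < p := (Fact.out : p.Prime).one_lt
  set C := (X ^ e * nPoly p K) /ₘ B
  refine ⟨C, ?_⟩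
  have hfilter : {n | K * p ^ (u + e) ≤ n ∧ n < (K + 1) * p ^ (u + e) ∧ B ∣ nPoly p n - R} =
      {n | K * p ^ (u + e) ≤ n ∧ n < (K + 1) * p ^ (u + e)} ∩ nPoly p ⁻¹' {q | B ∣ q - R} := by
    ext n
    simp [and_assoc]
  rw [hfilter, Set.image_inter_preimage, image_nPoly_Ico hp]
  ext q
  simp only [Set.mem_inter_iff, Set.mem_ofPred_eq]
  constructor
  · rintro ⟨hdeg, t, ht⟩
    obtain rfl : q = B * t + R := sub_eq_iff_eq_add.1 ht
    rw [degree_mul_add_sub_X_pow_mul_lt_iff hB hBe hR] at hdeg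
    exact ⟨t - X ^ u * C, hdeg, by ring⟩
  · rintro ⟨r, hr, rfl⟩
    have hq : (r + X ^ u * C) * B + R = B * (r + X ^ u * C) + R := by ring
    rw [hq, degree_mul_add_sub_X_pow_mul_lt_iff hB hBe hR, add_sub_cancel_right]
    exact ⟨hr, _, add_sub_cancel_right _ _⟩

/-- Among the integers `n` in `[K·p^(u+e), (K+1)·p^(u+e))`, the associated
polynomials `n(X)` congruent to `R(X)` mod `B(X)` are exactly
`{(r(X) + X^u·C(X))·B(X) + R(X) : deg r < u}` for some fixed polynomial `C(X)`. -/
theorem statement0 (p : ℕ) [Fact p.Prime] (e : ℕ) (B R : Polynomial (ZMod p))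
    (hB : B.Monic) (hBe : B.natDegree = e) (hR : R.degree < (e : ℕ))
    (u : ℕ) (hu : 0 < u) (K : ℕ) :
    ∃ C : Polynomial (ZMod p),
      (nPoly p '' {n : ℕ | K * p ^ (u + e) ≤ n ∧ n < (K + 1) * p ^ (u + e) ∧
          B ∣ (nPoly p n - R)})
        = {q : Polynomial (ZMod p) | ∃ r : Polynomial (ZMod p), r.degree < (u : ℕ) ∧
            q = (r + Polynomial.X ^ u * C) * B + R} :=
  statement0_general p e B R hB hBe hR u K

end KH
end
end

section
/- Let L ∈ F_p((X^{-1})) have continued fraction expansion L = [A_0; A_1, A_2, ...] with all partial quotients A_d (d ≥ 1) of degree at most K(L) := sup_{d≥1} deg(A_d) < ∞, and let B ∈ F_p[X] be nonzero of degree e. Write the Laurent series of BL as BL = Σ_{i≥w} a_i X^{-i}. Then for every integer m > K(L) + e - 1, the vectors c_j = (a_j, a_{j+1}, ..., a_{j+m-1}) for j = 1, ..., m - (K(L)+e-1) are linearly independent over F_p. -/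
open scoped Classical ENNReal
open Polynomial

noncomputable section

namespace KH

/-!
If `∑ g_j c_j = 0` with `g ≠ 0`, then `Q = (∑ g_j X^j) B` is a nonzero polynomial of degree
at most `m - K(L)` such that the coefficients of `X⁻¹, …, X⁻ᵐ` in `Q L` all vanish. The degrees
`d_h` of the convergent denominators `Q_h` increase in steps of at most `K(L)`, so some `d_{h+1}`
lies in `(deg Q, deg Q + K(L)]`. Best approximation by convergents then gives a nonzero
coefficient of `Q L` at an index in `[1, d_{h+1}] ⊆ [1, m]`: otherwise `u = Q P_{h+1} - P Q_{h+1}`,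
with `P` the polynomial part of `Q L`, equals `Q_{h+1} {Q L} - Q (Q_{h+1} L - P_{h+1})`, so it is
a polynomial of positive order, hence `0`; then `P_{h+1} Q_h - P_h Q_{h+1} = ±1` makes `Q` a
multiple of `Q_{h+1}`, contradicting `deg Q < d_{h+1}`.
-/

lemma exists_lt_succ_le_add_of_step_le {a : ℕ → ℤ} {n K : ℤ} (h0 : a 0 ≤ n)
    (hstep : ∀ k, a (k + 1) ≤ a k + K) (hunb : ∃ k, n < a k) :
    ∃ k, n < a (k + 1) ∧ a (k + 1) ≤ n + K := by
  classical
  obtain ⟨k, hk⟩ : ∃ k, Nat.find hunb = k + 1 := by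
    refine Nat.exists_eq_succ_of_ne_zero fun h => ?_
    have := Nat.find_spec hunb
    rw [h] at this
    omega
  have hmin := Nat.find_min hunb (show k < Nat.find hunb by omega)
  refine ⟨k, hk ▸ Nat.find_spec hunb, ?_⟩
  have := hstep k
  omega

section NonposSubring

variable (Γ R : Type*) [AddCommMonoid Γ] [LinearOrder Γ] [IsOrderedCancelAddMonoid Γ] [Ring R]

/-- In `LS p` this is the image of `F_p[X]` under `P2L`. -/
def nonposSubring : Subring (HahnSeries Γ R) where
  carrier := {x | ∀ i, 0 < i → x.coeff i = 0}
  zero_mem' _ _ := rfl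
  one_mem' i hi := by rw [HahnSeries.coeff_one, if_neg hi.ne']
  add_mem' hx hy i hi := by rw [HahnSeries.coeff_add, hx i hi, hy i hi, add_zero]
  neg_mem' hx i hi := by rw [HahnSeries.coeff_neg, hx i hi, neg_zero]
  mul_mem' {x y} hx hy i hi := by
    by_contra hne
    obtain ⟨a, ha, b, hb, rfl⟩ := Set.mem_add.mp (HahnSeries.support_mul_subset hne)
    have ha' : a ≤ 0 := not_lt.mp fun h => ha (hx a h)
    have hb' : b ≤ 0 := not_lt.mp fun h => hb (hy b h)
    exact (add_nonpos ha' hb').not_gt hi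

variable {Γ R}

lemma eq_zero_of_mem_nonposSubring_of_orderTop_pos {x : HahnSeries Γ R}
    (hx : x ∈ nonposSubring Γ R) (hpos : 0 < x.orderTop) : x = 0 := by
  ext i
  rcases lt_or_ge 0 i with hi | hi
  · exact hx i hi
  · exact HahnSeries.coeff_eq_zero_of_lt_orderTop
      (lt_of_le_of_lt (WithTop.coe_le_coe.mpr hi) hpos)

lemma orderTop_nonpos_of_mem_nonposSubring {x : HahnSeries Γ R}
    (hx : x ∈ nonposSubring Γ R) (hx0 : x ≠ 0) : x.orderTop ≤ 0 :=
  not_lt.mp fun hpos => hx0 (eq_zero_of_mem_nonposSubring_of_orderTop_pos hx hpos)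

end NonposSubring

section LaurentSeries

variable {p : ℕ}

lemma orderTop_eq_neg_nu {x : LS p} (hx : x ≠ 0) :
    x.orderTop = ((-nu x : ℤ) : WithTop ℤ) := by
  rw [nu, neg_neg, HahnSeries.order_eq_orderTop_of_ne_zero hx]

lemma neg_nu_le_orderTop (x : LS p) : ((-nu x : ℤ) : WithTop ℤ) ≤ x.orderTop := by
  rcases eq_or_ne x 0 with rfl | hx
  · simp
  · exact (orderTop_eq_neg_nu hx).ge

lemma nu_eq_of_orderTop_eq {x : LS p} {a : ℤ} (h : x.orderTop = a) : nu x = -a := by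
  have hx : x ≠ 0 := HahnSeries.orderTop_ne_top.mp (by simp [h])
  rw [orderTop_eq_neg_nu hx] at h
  have := WithTop.coe_injective h
  omega

lemma frac_zero : frac (0 : LS p) = 0 := by
  ext i
  simp [frac]

lemma sub_frac_mem_nonposSubring (x : LS p) : x - frac x ∈ nonposSubring ℤ (ZMod p) := by
  intro i hi
  simp [frac, show (1 : ℤ) ≤ i by omega]

lemma one_le_orderTop_frac (x : LS p) : 1 ≤ (frac x).orderTop := by
  rw [HahnSeries.le_orderTop_iff_forall]
  intro i hi
  simp [frac, show ¬ (1 : ℤ) ≤ i by exact_mod_cast not_le.mpr hi]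

end LaurentSeries

section PolynomialEmbedding

variable {p : ℕ} [Fact p.Prime]

lemma P2L_monomial (n : ℕ) (a : ZMod p) :
    P2L p (monomial n a) = HahnSeries.single (-(n : ℤ)) a := by
  have hC : P2L p (C a) = HahnSeries.single 0 a :=
    RingHom.congr_fun (RingHom.ext_zmod ((P2L p).comp C) HahnSeries.C) a
  have hX : P2L p (X ^ n) = HahnSeries.single (-(n : ℤ)) 1 := by
    rw [map_pow, P2L, AlgHom.toRingHom_eq_coe, RingHom.coe_coe, aeval_X, Xls,
      HahnSeries.single_pow, one_pow, nsmul_eq_mul, mul_neg_one]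
  rw [← C_mul_X_pow_eq_monomial, map_mul, hC, hX, HahnSeries.single_mul_single, zero_add, mul_one]

lemma coeff_P2L (B : Polynomial (ZMod p)) (i : ℤ) :
    (P2L p B).coeff i = if i ≤ 0 then B.coeff (-i).toNat else 0 := by
  induction B using Polynomial.induction_on' with
  | add q r hq hr =>
    rw [map_add, HahnSeries.coeff_add, hq, hr, coeff_add]
    split_ifs <;> simp
  | monomial n a =>
    rw [P2L_monomial, HahnSeries.coeff_single, coeff_monomial]
    by_cases h : i = -(n : ℤ)
    · rw [if_pos h, if_pos (by omega), if_pos (by omega)]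
    · rw [if_neg h]
      split_ifs <;> first | rfl | omega

lemma P2L_mem_nonposSubring (B : Polynomial (ZMod p)) : P2L p B ∈ nonposSubring ℤ (ZMod p) := by
  intro i hi
  rw [coeff_P2L, if_neg (by omega)]

lemma orderTop_P2L {B : Polynomial (ZMod p)} (hB : B ≠ 0) :
    (P2L p B).orderTop = ((-(B.natDegree : ℤ) : ℤ) : WithTop ℤ) := by
  refine HahnSeries.orderTop_eq_of_le ?_ fun i hi => ?_
  · rw [HahnSeries.mem_support, coeff_P2L, if_pos (by omega), neg_neg, Int.toNat_natCast]
    exact leadingCoeff_ne_zero.mpr hB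
  · rw [HahnSeries.mem_support, coeff_P2L] at hi
    split_ifs at hi with h0
    · have := le_natDegree_of_ne_zero hi
      omega
    · exact absurd rfl hi

lemma coeff_P2L_ofFn_mul {n : ℕ} (g : Fin n → ZMod p) (S : LS p) (i : ℤ) :
    (P2L p (ofFn n g) * S).coeff i = ∑ j, g j * S.coeff (i + j) := by
  simp only [ofFn_eq_sum_monomial, map_sum, Finset.sum_mul, HahnSeries.coeff_sum, P2L_monomial,
    HahnSeries.coeff_single_mul, sub_neg_eq_add]

lemma coeff_P2L_ofFn_mul_eq_zero {n m : ℕ} (g : Fin n → ZMod p) (S : LS p)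
    (hg : ∑ j, g j • (fun i : Fin m => S.coeff ((j : ℤ) + 1 + i)) = 0) {i : ℤ} (h1 : 1 ≤ i)
    (h2 : i ≤ m) : (P2L p (ofFn n g) * S).coeff i = 0 := by
  have := congrFun hg ⟨(i - 1).toNat, by omega⟩
  simp only [Finset.sum_apply, Pi.smul_apply, smul_eq_mul, Pi.zero_apply] at this
  rw [coeff_P2L_ofFn_mul, ← this]
  refine Finset.sum_congr rfl fun j _ => ?_
  congr 2
  omega

end PolynomialEmbedding

section ContinuedFraction

variable {p : ℕ} [Fact p.Prime]

def cfE (L : LS p) (h : ℕ) : LS p := cfQ L h * L - cfP L h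

lemma cfA_mem_nonposSubring (L : LS p) (n : ℕ) : cfA L n ∈ nonposSubring ℤ (ZMod p) :=
  sub_frac_mem_nonposSubring _

lemma cfQ_mem_nonposSubring (L : LS p) : ∀ h, cfQ L h ∈ nonposSubring ℤ (ZMod p)
  | 0 => one_mem _
  | 1 => cfA_mem_nonposSubring L 1
  | n + 2 => add_mem (mul_mem (cfA_mem_nonposSubring L _) (cfQ_mem_nonposSubring L (n + 1)))
      (cfQ_mem_nonposSubring L n)

lemma cfP_mem_nonposSubring (L : LS p) : ∀ h, cfP L h ∈ nonposSubring ℤ (ZMod p)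
  | 0 => cfA_mem_nonposSubring L 0
  | 1 => add_mem (mul_mem (cfA_mem_nonposSubring L 1) (cfA_mem_nonposSubring L 0)) (one_mem _)
  | n + 2 => add_mem (mul_mem (cfA_mem_nonposSubring L _) (cfP_mem_nonposSubring L (n + 1)))
      (cfP_mem_nonposSubring L n)

lemma cfP_mul_cfQ_sub_cfP_mul_cfQ (L : LS p) (h : ℕ) :
    cfP L (h + 1) * cfQ L h - cfP L h * cfQ L (h + 1) = (-1) ^ h := by
  induction h with
  | zero => simp only [cfP, cfQ]; ring
  | succ n ih =>
    simp only [cfP, cfQ] at ih ⊢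
    linear_combination -ih

lemma exists_eq_cfQ_mul_of_mul_cfP_eq (L : LS p) (h : ℕ) {Q P : LS p}
    (hQ : Q ∈ nonposSubring ℤ (ZMod p)) (hP : P ∈ nonposSubring ℤ (ZMod p))
    (hQP : Q * cfP L (h + 1) = P * cfQ L (h + 1)) :
    ∃ v ∈ nonposSubring ℤ (ZMod p), Q = cfQ L (h + 1) * v := by
  have hdet := cfP_mul_cfQ_sub_cfP_mul_cfQ L h
  have hsq : ((-1 : LS p) ^ h) * (-1) ^ h = 1 := by rw [← mul_pow, neg_one_mul, neg_neg, one_pow]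
  refine ⟨(-1) ^ h * (P * cfQ L h - Q * cfP L h),
    mul_mem (pow_mem (neg_mem (one_mem _)) h) (sub_mem (mul_mem hP (cfQ_mem_nonposSubring L h))
      (mul_mem hQ (cfP_mem_nonposSubring L h))), ?_⟩
  linear_combination (-1) ^ h * cfQ L h * hQP - (-1) ^ h * Q * hdet - Q * hsq

lemma dQ_zero (L : LS p) : dQ L 0 = 0 := by
  simp [dQ, cfQ, nu]

lemma cfE_zero (L : LS p) : cfE L 0 = frac (cfRem L 0) := by
  simp only [cfE, cfQ, cfP, cfA, cfRem]
  ring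

variable {L : LS p}

lemma cfA_ne_zero (hinf : ∀ d : ℕ, 1 ≤ d → 1 ≤ degA L d) {d : ℕ} (hd : 1 ≤ d) :
    cfA L d ≠ 0 := by
  intro h
  have := hinf d hd
  simp [degA, h, nu] at this

lemma orderTop_cfA (hinf : ∀ d : ℕ, 1 ≤ d → 1 ≤ degA L d) {d : ℕ} (hd : 1 ≤ d) :
    (cfA L d).orderTop = ((-degA L d : ℤ) : WithTop ℤ) :=
  orderTop_eq_neg_nu (cfA_ne_zero hinf hd)

lemma frac_cfRem_ne_zero (hinf : ∀ d : ℕ, 1 ≤ d → 1 ≤ degA L d) (n : ℕ) :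
    frac (cfRem L n) ≠ 0 := by
  intro h
  apply cfA_ne_zero hinf (Nat.le_add_left 1 n)
  rw [cfA, cfRem, h, inv_zero, frac_zero, sub_zero]

lemma orderTop_frac_cfRem (hinf : ∀ d : ℕ, 1 ≤ d → 1 ≤ degA L d) (n : ℕ) :
    (frac (cfRem L n)).orderTop = (degA L (n + 1) : WithTop ℤ) := by
  set f := frac (cfRem L n)
  have hf : f ≠ 0 := frac_cfRem_ne_zero hinf n
  obtain ⟨a, ha⟩ : ∃ a : ℤ, f.orderTop = a := ⟨-nu f, orderTop_eq_neg_nu hf⟩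
  have hinv : (f⁻¹).orderTop = (-a : ℤ) := by
    have h1 := HahnSeries.orderTop_mul f f⁻¹
    rw [mul_inv_cancel₀ hf, HahnSeries.orderTop_one, ha,
      orderTop_eq_neg_nu (inv_ne_zero hf)] at h1
    have h2 : a + -nu f⁻¹ = 0 := by exact_mod_cast h1.symm
    rw [orderTop_eq_neg_nu (inv_ne_zero hf)]
    congr 1
    omega
  have ha1 : 1 ≤ a := by exact_mod_cast ha ▸ one_le_orderTop_frac (cfRem L n)
  -- the partial quotient `A_{n+1} = f⁻¹ - {f⁻¹}` has the order of its leading part `f⁻¹`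
  have hA : (cfA L (n + 1)).orderTop = (-a : ℤ) := by
    rw [cfA, cfRem, sub_eq_add_neg, HahnSeries.orderTop_add_eq_left, hinv]
    rw [HahnSeries.orderTop_neg, hinv]
    refine lt_of_lt_of_le ?_ (one_le_orderTop_frac _)
    exact_mod_cast (by omega : -a < 1)
  rw [ha, degA, nu_eq_of_orderTop_eq hA, neg_neg]

lemma orderTop_cfQ_succ (hinf : ∀ d : ℕ, 1 ≤ d → 1 ≤ degA L d) (h : ℕ) :
    (cfQ L (h + 1)).orderTop = ((-(dQ L h + degA L (h + 1)) : ℤ) : WithTop ℤ) := by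
  induction h with
  | zero => rw [cfQ, orderTop_cfA hinf le_rfl, dQ_zero, zero_add]
  | succ n ih =>
    have hdQ : dQ L (n + 1) = dQ L n + degA L (n + 1) := by
      rw [dQ, nu_eq_of_orderTop_eq ih, neg_neg]
    have hlead : (cfA L (n + 2) * cfQ L (n + 1)).orderTop
        = ((-(dQ L (n + 1) + degA L (n + 2)) : ℤ) : WithTop ℤ) := by
      rw [HahnSeries.orderTop_mul, orderTop_cfA hinf (by omega), ih, hdQ, ← WithTop.coe_add]
      congr 1
      ring
    rw [cfQ, HahnSeries.orderTop_add_eq_left, hlead]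
    refine lt_of_lt_of_le ?_ (neg_nu_le_orderTop (cfQ L n))
    rw [hlead, ← dQ]
    have := hinf (n + 1) (by omega)
    have := hinf (n + 2) (by omega)
    exact_mod_cast (by omega : -(dQ L (n + 1) + degA L (n + 2)) < -dQ L n)

lemma dQ_succ (hinf : ∀ d : ℕ, 1 ≤ d → 1 ≤ degA L d) (h : ℕ) :
    dQ L (h + 1) = dQ L h + degA L (h + 1) := by
  rw [dQ, nu_eq_of_orderTop_eq (orderTop_cfQ_succ hinf h), neg_neg]

lemma orderTop_cfQ (hinf : ∀ d : ℕ, 1 ≤ d → 1 ≤ degA L d) (h : ℕ) :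
    (cfQ L h).orderTop = ((-dQ L h : ℤ) : WithTop ℤ) := by
  cases h with
  | zero => simp [dQ_zero, cfQ]
  | succ n => rw [orderTop_cfQ_succ hinf, dQ_succ hinf]

lemma le_dQ (hinf : ∀ d : ℕ, 1 ≤ d → 1 ≤ degA L d) (h : ℕ) : (h : ℤ) ≤ dQ L h := by
  induction h with
  | zero => rw [dQ_zero]; rfl
  | succ n ih =>
    rw [dQ_succ hinf]
    have := hinf (n + 1) (by omega)
    push_cast
    omega

lemma cfE_succ (hinf : ∀ d : ℕ, 1 ≤ d → 1 ≤ degA L d) (h : ℕ) :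
    cfE L (h + 1) = -(frac (cfRem L (h + 1)) * cfE L h) := by
  induction h with
  | zero =>
    have hinv := inv_mul_cancel₀ (frac_cfRem_ne_zero hinf 0)
    simp only [cfE, cfQ, cfP, cfA, cfRem] at hinv ⊢
    linear_combination hinv
  | succ n ih =>
    have hinv := inv_mul_cancel₀ (frac_cfRem_ne_zero hinf (n + 1))
    have hA : cfA L (n + 2) = (frac (cfRem L (n + 1)))⁻¹ - frac (cfRem L (n + 2)) := rfl
    simp only [cfE, cfQ, cfP, hA] at ih ⊢
    linear_combination (frac (cfRem L (n + 1)))⁻¹ * ih - (cfQ L n * L - cfP L n) * hinv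

lemma orderTop_cfE (hinf : ∀ d : ℕ, 1 ≤ d → 1 ≤ degA L d) (h : ℕ) :
    (cfE L h).orderTop = (dQ L (h + 1) : WithTop ℤ) := by
  induction h with
  | zero => simp [cfE_zero, orderTop_frac_cfRem hinf, dQ_succ hinf, dQ_zero]
  | succ n ih =>
    rw [cfE_succ hinf, HahnSeries.orderTop_neg, HahnSeries.orderTop_mul, ih,
      orderTop_frac_cfRem hinf, dQ_succ hinf (n + 1), ← WithTop.coe_add, add_comm]

lemma exists_lt_dQ_succ_le_add (hinf : ∀ d : ℕ, 1 ≤ d → 1 ≤ degA L d) {K : ℤ}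
    (hK : ∀ d : ℕ, 1 ≤ d → degA L d ≤ K) (n : ℕ) :
    ∃ h, (n : ℤ) < dQ L (h + 1) ∧ dQ L (h + 1) ≤ n + K := by
  refine exists_lt_succ_le_add_of_step_le (by rw [dQ_zero]; positivity) (fun k => ?_)
    ⟨n + 1, by exact_mod_cast le_dQ hinf (n + 1)⟩
  rw [dQ_succ hinf]
  linarith [hK (k + 1) (by omega)]

lemma orderTop_cfQ_mul_le (hinf : ∀ d : ℕ, 1 ≤ d → 1 ≤ degA L d) (h : ℕ) {v : LS p}
    (hv : v ∈ nonposSubring ℤ (ZMod p)) (hv0 : v ≠ 0) :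
    (cfQ L h * v).orderTop ≤ ((-dQ L h : ℤ) : WithTop ℤ) := by
  rw [HahnSeries.orderTop_mul, orderTop_cfQ hinf]
  calc _ ≤ ((-dQ L h : ℤ) : WithTop ℤ) + 0 := by
        gcongr
        exact orderTop_nonpos_of_mem_nonposSubring hv hv0
    _ = _ := add_zero _

lemma orderTop_cfQ_mul_sub_mul_cfE_pos (hinf : ∀ d : ℕ, 1 ≤ d → 1 ≤ degA L d) (h : ℕ)
    {Q F : LS p} (hQ : ((-dQ L (h + 1) : ℤ) : WithTop ℤ) < Q.orderTop)
    (hF : ((dQ L (h + 1) + 1 : ℤ) : WithTop ℤ) ≤ F.orderTop) :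
    0 < (cfQ L (h + 1) * F - Q * cfE L (h + 1)).orderTop := by
  rw [sub_eq_add_neg]
  refine lt_of_lt_of_le (lt_min ?_ ?_) HahnSeries.min_orderTop_le_orderTop_add
  · rw [HahnSeries.orderTop_mul, orderTop_cfQ hinf]
    calc (0 : WithTop ℤ)
        < ((-dQ L (h + 1) : ℤ) : WithTop ℤ) + ((dQ L (h + 1) + 1 : ℤ) : WithTop ℤ) := by
          norm_cast
          omega
      _ ≤ _ := by gcongr
  · rw [HahnSeries.orderTop_neg, HahnSeries.orderTop_mul, orderTop_cfE hinf]
    have hmono : dQ L (h + 1) ≤ dQ L (h + 1 + 1) := by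
      have := hinf (h + 1 + 1) (by omega)
      rw [dQ_succ hinf (h + 1)]
      omega
    calc (0 : WithTop ℤ)
        ≤ ((-dQ L (h + 1) : ℤ) : WithTop ℤ) + (dQ L (h + 1 + 1) : WithTop ℤ) := by
          norm_cast
          omega
      _ < _ := WithTop.add_lt_add_right WithTop.coe_ne_top hQ

/-- Best approximation by convergents. -/
lemma exists_coeff_mul_ne_zero (hinf : ∀ d : ℕ, 1 ≤ d → 1 ≤ degA L d) (h : ℕ) {Q : LS p}
    (hQ : Q ∈ nonposSubring ℤ (ZMod p)) (hQ0 : Q ≠ 0)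
    (hdeg : ((-dQ L (h + 1) : ℤ) : WithTop ℤ) < Q.orderTop) :
    ∃ i : ℤ, 1 ≤ i ∧ i ≤ dQ L (h + 1) ∧ (Q * L).coeff i ≠ 0 := by
  by_contra! hvan
  set F := frac (Q * L)
  set P := Q * L - F
  have hF : ((dQ L (h + 1) + 1 : ℤ) : WithTop ℤ) ≤ F.orderTop := by
    rw [HahnSeries.le_orderTop_iff_forall]
    intro i hi
    have hi' : i < dQ L (h + 1) + 1 := by exact_mod_cast hi
    simp only [F, frac]
    split_ifs with h1
    · exact hvan i h1 (by omega)
    · rfl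
  have hu : Q * cfP L (h + 1) - P * cfQ L (h + 1) = cfQ L (h + 1) * F - Q * cfE L (h + 1) := by
    simp only [P, cfE]
    ring
  have hu0 : Q * cfP L (h + 1) - P * cfQ L (h + 1) = 0 :=
    eq_zero_of_mem_nonposSubring_of_orderTop_pos
      (sub_mem (mul_mem hQ (cfP_mem_nonposSubring L _))
        (mul_mem (sub_frac_mem_nonposSubring _) (cfQ_mem_nonposSubring L _)))
      (hu ▸ orderTop_cfQ_mul_sub_mul_cfE_pos hinf h hdeg hF)
  obtain ⟨v, hv, rfl⟩ := exists_eq_cfQ_mul_of_mul_cfP_eq L h hQ (sub_frac_mem_nonposSubring _)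
    (sub_eq_zero.mp hu0)
  have hv0 : v ≠ 0 := by
    rintro rfl
    exact hQ0 (mul_zero _)
  exact (orderTop_cfQ_mul_le hinf (h + 1) hv hv0).not_gt hdeg

end ContinuedFraction

theorem statement1_general (p : ℕ) [Fact p.Prime] (L : LS p)
    (hinf : ∀ d : ℕ, 1 ≤ d → 1 ≤ degA L d)
    (KL : ℕ) (hKle : ∀ d : ℕ, 1 ≤ d → degA L d ≤ (KL : ℤ))
    (B : Polynomial (ZMod p)) (hB : B ≠ 0) (e : ℕ) (hBe : B.natDegree = e)
    (m : ℕ) :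
    LinearIndependent (ZMod p)
      (fun j : Fin (m - (KL + e - 1)) => fun i : Fin m =>
        (P2L p B * L).coeff ((j : ℤ) + 1 + (i : ℤ))) := by
  rw [Fintype.linearIndependent_iff]
  intro g hg
  by_contra! ⟨j₀, hj₀⟩
  have hH : ofFn _ g ≠ 0 := fun h0 => hj₀ <| by
    rw [injective_ofFn _ (h0.trans (ofFn_zero _).symm)]
    rfl
  set Q := ofFn _ g * B
  have hQ0 : Q ≠ 0 := mul_ne_zero hH hB
  have hdegQ : (Q.natDegree : ℤ) + KL ≤ m := by
    have := ofFn_natDegree_lt (Fin.pos j₀) g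
    rw [natDegree_mul hH hB, hBe]
    omega
  obtain ⟨h, hlt, hle⟩ := exists_lt_dQ_succ_le_add hinf hKle Q.natDegree
  have hQL := orderTop_P2L hQ0
  obtain ⟨i, hi1, hi2, hi⟩ := exists_coeff_mul_ne_zero hinf h (P2L_mem_nonposSubring Q)
    (HahnSeries.orderTop_ne_top.mp (hQL ▸ WithTop.coe_ne_top))
    (by rw [hQL]; exact_mod_cast (by omega))
  rw [map_mul, mul_assoc] at hi
  exact hi (coeff_P2L_ofFn_mul_eq_zero g _ hg hi1 (by omega))

/-- If all partial quotients of `L` have degree at most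
`K(L) = sup_{d≥1} deg A_d < ∞` and `B ≠ 0` has degree `e`, then for every `m > K(L)+e-1`
the Hankel vectors `c_j = (a_j, …, a_{j+m-1})`, `1 ≤ j ≤ m-(K(L)+e-1)`, of the Laurent
coefficients of `BL` are linearly independent over `F_p`. -/
theorem statement1 (p : ℕ) [Fact p.Prime] (L : LS p)
    (hinf : ∀ d : ℕ, 1 ≤ d → 1 ≤ degA L d)
    (KL : ℕ) (hKle : ∀ d : ℕ, 1 ≤ d → degA L d ≤ (KL : ℤ))
    (hKatt : ∃ d : ℕ, 1 ≤ d ∧ degA L d = (KL : ℤ))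
    (B : Polynomial (ZMod p)) (hB : B ≠ 0) (e : ℕ) (hBe : B.natDegree = e)
    (m : ℕ) (hm : KL + e - 1 < m) :
    LinearIndependent (ZMod p)
      (fun j : Fin (m - (KL + e - 1)) => fun i : Fin m =>
        (P2L p B * L).coeff ((j : ℤ) + 1 + (i : ℤ))) :=
  statement1_general p L hinf KL hKle B hB e hBe m

end KH
end
end

section
/- Let L ∈ F_2((X^{-1})) satisfy L^2 + X^2 L + X = 0 with ν(L) < 0 (where ν denotes the degree valuation). Then the Laurent series expansion of L is L = Σ_{n≥1} X^{-(2^{n+1} - 2^{n-1} - 2)}. -/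
/-!
Comparing the coefficients of `X^{-i}` in `L² + X²L + X = 0`, and using that squaring in
characteristic two sends `a_k X^{-k}` to `a_k X^{-2k}`, gives `a_{2k+2} = a_k` and
`a_{2k+1} = [k = 0]`, while `a_i = 0` for `i ≤ 0` because `ν(L) < 0`. This recursion determines
the coefficients, and the set `{3·2^m - 2}` satisfies it: it contains `1`, no other odd number,
and `k ↦ 2k + 2` maps it onto its even elements.
-/

open scoped Classical ENNReal
open Polynomial

noncomputable section

namespace HahnSeries

variable {R : Type*} [CommSemiring R] [CharP R 2]

open Finset in
-- In characteristic two the off-diagonal products `x_a x_b + x_b x_a` cancel in pairs.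
theorem coeff_sq_of_charTwo (x : HahnSeries ℤ R) (i : ℤ) :
    (x ^ 2).coeff i = if Even i then x.coeff (i / 2) ^ 2 else 0 := by
  rw [pow_two, coeff_mul, ← sum_filter_add_sum_filter_not _ (fun ij : ℤ × ℤ => ij.1 = ij.2)]
  have h_offDiag : ∑ ij ∈ antidiagonal x.isPWO_support x.isPWO_support i with ¬ij.1 = ij.2,
      x.coeff ij.1 * x.coeff ij.2 = 0 := by
    refine sum_involution (fun ij _ => ij.swap) (fun ij _ => ?_) (fun ij hij _ h => ?_)
      (fun ij hij => ?_) (fun ij _ => rfl)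
    · rw [Prod.fst_swap, Prod.snd_swap, mul_comm (x.coeff ij.2), CharTwo.add_self_eq_zero]
    · exact (mem_filter.1 hij).2 (Prod.ext_iff.1 h).1.symm
    · rw [mem_filter, Finset.mem_antidiagonal] at hij ⊢
      refine ⟨⟨hij.1.2.1, hij.1.1, ?_⟩, fun h => hij.2 h.symm⟩
      rw [Prod.fst_swap, Prod.snd_swap, add_comm]
      exact hij.1.2.2
  rw [h_offDiag, add_zero]
  split_ifs with hi
  · have h_half : i / 2 + i / 2 = i := by obtain ⟨k, rfl⟩ := hi; omega
    rw [sum_eq_single (i / 2, i / 2), pow_two]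
    · intro ij hij hne
      rw [mem_filter, Finset.mem_antidiagonal] at hij
      exact absurd (Prod.ext (by omega) (by omega)) hne
    · intro hnot
      by_cases hc : x.coeff (i / 2) = 0
      · rw [hc, mul_zero]
      · exact (hnot (mem_filter.2 ⟨Finset.mem_antidiagonal.2 ⟨hc, hc, h_half⟩, rfl⟩)).elim
  · refine sum_eq_zero fun ij hij => absurd ⟨ij.1, ?_⟩ hi
    rw [mem_filter, Finset.mem_antidiagonal] at hij
    omega

end HahnSeries

namespace KH

theorem coeff_Xls (p : ℕ) (j : ℤ) : (Xls p).coeff j = if j = -1 then 1 else 0 := by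
  rw [Xls, HahnSeries.coeff_single]
  congr

theorem coeff_Xls_sq_mul {p : ℕ} (L : LS p) (j : ℤ) :
    (Xls p ^ 2 * L).coeff j = L.coeff (j + 2) := by
  rw [Xls, HahnSeries.single_pow, one_pow, show (2 • (-1) : ℤ) = -2 by norm_num,
    show j = (j + 2) + -2 by omega, HahnSeries.coeff_single_mul_add, one_mul, add_neg_cancel_right]

theorem coeff_add_two_of_eq {L : LS 2} (heq : L ^ 2 + (Xls 2) ^ 2 * L + Xls 2 = 0) (j : ℤ) :
    L.coeff (j + 2) = (L ^ 2).coeff j + (Xls 2).coeff j := by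
  have h := congrArg (HahnSeries.coeff · j) heq
  simp only [HahnSeries.coeff_add, HahnSeries.coeff_zero, coeff_Xls_sq_mul] at h
  rw [← sub_eq_zero, CharTwo.sub_eq_add, add_left_comm, ← add_assoc]
  exact h

theorem coeff_two_mul_add_two_of_eq {L : LS 2} (heq : L ^ 2 + (Xls 2) ^ 2 * L + Xls 2 = 0)
    (k : ℤ) : L.coeff (2 * k + 2) = L.coeff k := by
  rw [coeff_add_two_of_eq heq, HahnSeries.coeff_sq_of_charTwo, if_pos (even_two_mul k),
    Int.mul_ediv_cancel_left k two_ne_zero, ZMod.pow_card, coeff_Xls, if_neg (by omega),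
    add_zero]

theorem coeff_two_mul_add_one_of_eq {L : LS 2} (heq : L ^ 2 + (Xls 2) ^ 2 * L + Xls 2 = 0)
    (k : ℤ) : L.coeff (2 * k + 1) = if k = 0 then 1 else 0 := by
  have h_odd : ¬Even (2 * k - 1) := Int.not_even_iff_odd.2 ⟨k - 1, by ring⟩
  rw [show 2 * k + 1 = (2 * k - 1) + 2 by ring, coeff_add_two_of_eq heq,
    HahnSeries.coeff_sq_of_charTwo, if_neg h_odd, zero_add, coeff_Xls]
  exact if_congr (by omega) rfl rfl

def IsExponent (i : ℤ) : Prop := ∃ m : ℕ, i = 2 ^ (m + 2) - 2 ^ m - 2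

theorem not_isExponent_of_nonpos {i : ℤ} (hi : i ≤ 0) : ¬IsExponent i := by
  rintro ⟨m, rfl⟩
  have : (0 : ℤ) < 2 ^ m := by positivity
  rw [pow_add] at hi
  omega

theorem isExponent_two_mul_add_one_iff (k : ℤ) : IsExponent (2 * k + 1) ↔ k = 0 := by
  constructor
  · rintro ⟨_ | m, hm⟩
    · omega
    · rw [pow_succ, pow_add] at hm
      omega
  · rintro rfl
    exact ⟨0, by norm_num⟩

theorem isExponent_two_mul_add_two_iff (k : ℤ) : IsExponent (2 * k + 2) ↔ IsExponent k := by
  constructor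
  · rintro ⟨_ | m, hm⟩
    · omega
    · exact ⟨m, by rw [pow_succ, pow_succ] at hm; rw [pow_succ]; omega⟩
  · rintro ⟨m, rfl⟩
    exact ⟨m + 1, by rw [pow_succ, pow_succ, pow_succ]; ring⟩

theorem eq_ite_isExponent_of_rec {R : Type*} [Zero R] [One R] {a : ℤ → R}
    (h_nonpos : ∀ i ≤ 0, a i = 0) (h_odd : ∀ k, a (2 * k + 1) = if k = 0 then 1 else 0)
    (h_even : ∀ k, a (2 * k + 2) = a k) (i : ℤ) : a i = if IsExponent i then 1 else 0 := by
  rcases le_or_gt i 0 with hi | hi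
  · rw [h_nonpos i hi, if_neg (not_isExponent_of_nonpos hi)]
  obtain ⟨k, rfl | rfl⟩ : ∃ k, i = 2 * k + 1 ∨ i = 2 * k + 2 := ⟨(i - 1) / 2, by omega⟩
  · rw [h_odd]
    exact if_congr (isExponent_two_mul_add_one_iff k).symm rfl rfl
  · rw [h_even, eq_ite_isExponent_of_rec h_nonpos h_odd h_even k]
    exact if_congr (isExponent_two_mul_add_two_iff k).symm rfl rfl
termination_by i.toNat
decreasing_by omega

/-- If `L ∈ F_2((X⁻¹))` satisfies `L² + X²L + X = 0` with `ν(L) < 0`, then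
its Laurent expansion is `L = ∑_{n ≥ 1} X^{-(2^{n+1} - 2^{n-1} - 2)}`, i.e. the coefficient
of `X^{-i}` is `1` exactly when `i = 2^(m+2) - 2^m - 2` for some `m ≥ 0`. -/
theorem statement3 (L : LS 2)
    (heq : L ^ 2 + (Xls 2) ^ 2 * L + Xls 2 = 0) (hnu : nu L < 0) :
    ∀ i : ℤ, L.coeff i =
      if ∃ m : ℕ, i = 2 ^ (m + 2) - 2 ^ m - 2 then 1 else 0 :=
  eq_ite_isExponent_of_rec
    (fun _ hi => HahnSeries.coeff_eq_zero_of_lt_order (by rw [nu] at hnu; omega))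
    (coeff_two_mul_add_one_of_eq heq) (coeff_two_mul_add_two_of_eq heq)

end KH
end
end

section
/- Let H be the set of formal Laurent series in F_p((X^{-1})) with negative degree (ν(L) < 0), identified with the product space Π_{i≥1} F_p via coefficients, equipped with the Haar (uniform product) measure h. For any nonzero polynomial B ∈ F_p[X], the map f: H → H, L ↦ {B·L} (fractional part of B times L) is measure preserving. -/
open scoped Classical ENNReal
open Polynomial

noncomputable section

namespace KH

/-! In coordinates, `L ↦ {B L}` is the additive map `a ↦ (∑ⱼ Bⱼ a_{i+j})ᵢ` of `(ZMod p)^ℕ`.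
It is surjective: since the leading coefficient of `B` is invertible, the equations can be solved
for `a_{i + deg B}`, `i = 0, 1, …`, one after the other. The Haar measure is translation
invariant, so the preimages of the `p^m` cylinders fixing the first `m` coordinates are translates
of one another; they partition the space, hence each has measure `p^{-m}`, like the cylinders
themselves. -/

open MeasureTheory

section Cylinder

variable {α : Type*}

def cyl (m : ℕ) (v : Fin m → α) : Set (ℕ → α) :=
  {a | ∀ i : Fin m, a i = v i}

def cylinders (α : Type*) : Set (Set (ℕ → α)) :=
  {s | ∃ m v, s = cyl m v}

lemma cyl_subset_cyl {m n : ℕ} (hmn : m ≤ n) {v : Fin m → α} {w : Fin n → α}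
    (hvw : (cyl n w ∩ cyl m v).Nonempty) : cyl n w ⊆ cyl m v := by
  obtain ⟨a, haw, hav⟩ := hvw
  intro b hb i
  have hi : (i : ℕ) < n := i.2.trans_le hmn
  rw [← hav i, hb ⟨i, hi⟩, haw ⟨i, hi⟩]

lemma isPiSystem_cylinders : IsPiSystem (cylinders α) := by
  rintro _ ⟨m, v, rfl⟩ _ ⟨n, w, rfl⟩ hne
  rcases le_total m n with hmn | hnm
  · exact ⟨n, w, Set.inter_eq_right.2 (cyl_subset_cyl hmn (Set.inter_comm _ _ ▸ hne))⟩
  · exact ⟨m, v, Set.inter_eq_left.2 (cyl_subset_cyl hnm hne)⟩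

lemma pairwise_disjoint_cyl (m : ℕ) :
    Pairwise (Function.onFun Disjoint fun v : Fin m → α => cyl m v) := fun _ _ hvw =>
  Set.disjoint_left.2 fun _ hv hw => hvw (funext fun i => (hv i).symm.trans (hw i))

lemma iUnion_cyl (m : ℕ) : ⋃ v : Fin m → α, cyl m v = Set.univ :=
  Set.eq_univ_of_forall fun a => Set.mem_iUnion.2 ⟨fun i => a i, fun _ => rfl⟩

lemma preimage_add_right_cyl [AddGroup α] (c : ℕ → α) (m : ℕ) (v : Fin m → α) :
    (· + c) ⁻¹' cyl m v = cyl m (fun i => v i - c i) := by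
  ext a
  exact forall_congr' fun i => eq_sub_iff_add_eq.symm

variable [MeasurableSpace α] [MeasurableSingletonClass α]

lemma measurableSet_cyl (m : ℕ) (v : Fin m → α) : MeasurableSet (cyl m v) := by
  rw [show cyl m v = ⋂ i : Fin m, (fun a : ℕ → α => a i) ⁻¹' {v i} by ext; simp [cyl]]
  exact .iInter fun i => measurable_pi_apply _ (measurableSet_singleton _)

lemma measurableSpace_pi_eq_generateFrom_cylinders [Countable α] :
    (MeasurableSpace.pi : MeasurableSpace (ℕ → α)) = .generateFrom (cylinders α) := by
  refine le_antisymm (iSup_le fun i => measurable_iff_comap_le.1 ?_)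
    (MeasurableSpace.generateFrom_le fun _ ⟨m, v, hs⟩ => hs ▸ measurableSet_cyl m v)
  refine @measurable_to_countable' _ _ _ _ (.generateFrom _) _ fun x => ?_
  have h : (fun a : ℕ → α => a i) ⁻¹' {x} =
      ⋃ (v : Fin (i + 1) → α) (_ : v (Fin.last i) = x), cyl (i + 1) v := by
    ext a
    simp only [Set.mem_preimage, Set.mem_singleton_iff, Set.mem_iUnion]
    refine ⟨fun ha => ⟨fun j => a j, ha, fun _ => rfl⟩, fun ⟨v, hv, hav⟩ => ?_⟩
    exact (hav (Fin.last i)).trans hv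
  rw [h]
  exact .iUnion fun v => .iUnion fun _ => .basic _ ⟨_, v, rfl⟩

lemma ext_of_measure_cyl [Countable α] (ν₁ ν₂ : Measure (ℕ → α)) [IsProbabilityMeasure ν₁]
    [IsProbabilityMeasure ν₂] (h : ∀ m v, ν₁ (cyl m v) = ν₂ (cyl m v)) : ν₁ = ν₂ :=
  ext_of_generate_finite _ measurableSpace_pi_eq_generateFrom_cylinders isPiSystem_cylinders
    (fun _ ⟨m, v, hs⟩ => hs ▸ h m v) (by simp)

variable [Fintype α]

lemma measure_cyl_eq_of_forall_eq (ν : Measure (ℕ → α)) [IsProbabilityMeasure ν]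
    (hν : ∀ m (v w : Fin m → α), ν (cyl m v) = ν (cyl m w)) (m : ℕ) (v : Fin m → α) :
    ν (cyl m v) = (Fintype.card α : ℝ≥0∞)⁻¹ ^ m := by
  have h : (Fintype.card α : ℝ≥0∞) ^ m * ν (cyl m v) = 1 := by
    rw [← measure_univ (μ := ν), ← iUnion_cyl m,
      measure_iUnion (pairwise_disjoint_cyl m) (measurableSet_cyl m), tsum_fintype,
      Finset.sum_congr rfl fun w _ => hν m w v, Finset.sum_const, Finset.card_univ,
      Fintype.card_fun, Fintype.card_fin, nsmul_eq_mul, Nat.cast_pow]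
  rw [ENNReal.eq_inv_of_mul_eq_one_left ((mul_comm _ _).trans h), ENNReal.inv_pow]

end Cylinder

section MeasurePreserving

variable {α : Type*} [AddGroup α] [MeasurableSpace α] [MeasurableAdd α]

lemma measure_preimage_cyl_eq_of_surjective (ν : Measure (ℕ → α)) [ν.IsAddRightInvariant]
    (f : (ℕ → α) →+ (ℕ → α)) (hf : Function.Surjective f) (m : ℕ) (v w : Fin m → α) :
    ν (f ⁻¹' cyl m v) = ν (f ⁻¹' cyl m w) := by
  obtain ⟨a, ha⟩ := hf fun n => if h : n < m then -v ⟨n, h⟩ + w ⟨n, h⟩ else 0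
  have hv : cyl m v = (· + f a) ⁻¹' cyl m w := by
    rw [preimage_add_right_cyl, ha]
    congr 1
    funext i
    simp only [dif_pos i.2, Fin.eta, sub_eq_add_neg, neg_add_rev, neg_neg, add_neg_cancel_left]
  have hpre : f ⁻¹' ((· + f a) ⁻¹' cyl m w) = (· + a) ⁻¹' (f ⁻¹' cyl m w) := by
    ext x
    simp only [Set.mem_preimage, map_add]
  rw [hv, hpre, measure_preimage_add_right]

variable [MeasurableSingletonClass α]

lemma isAddRightInvariant_of_measure_cyl [Countable α] (ν : Measure (ℕ → α))
    [IsProbabilityMeasure ν]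
    (hν : ∀ m (v w : Fin m → α), ν (cyl m v) = ν (cyl m w)) : ν.IsAddRightInvariant where
  map_add_right_eq_self c := by
    have hc : Measurable (· + c) := measurable_add_const c
    have : IsProbabilityMeasure (ν.map (· + c)) :=
      Measure.isProbabilityMeasure_map hc.aemeasurable
    refine ext_of_measure_cyl _ _ fun m v => ?_
    rw [Measure.map_apply hc (measurableSet_cyl m v), preimage_add_right_cyl, hν]

theorem measurePreserving_of_surjective [Fintype α] (ν : Measure (ℕ → α))
    [IsProbabilityMeasure ν]
    (hν : ∀ m (v w : Fin m → α), ν (cyl m v) = ν (cyl m w))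
    (f : (ℕ → α) →+ (ℕ → α)) (hf : Function.Surjective f) (hmeas : Measurable f) :
    MeasurePreserving f ν ν := by
  have := isAddRightInvariant_of_measure_cyl ν hν
  have : IsProbabilityMeasure (ν.map f) := Measure.isProbabilityMeasure_map hmeas.aemeasurable
  have hfν : ∀ m (v w : Fin m → α), ν.map f (cyl m v) = ν.map f (cyl m w) := fun m v w => by
    simp only [Measure.map_apply hmeas (measurableSet_cyl _ _)]
    exact measure_preimage_cyl_eq_of_surjective ν f hf m v w
  refine ⟨hmeas, ext_of_measure_cyl _ _ fun m v => ?_⟩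
  rw [measure_cyl_eq_of_forall_eq _ hfν, measure_cyl_eq_of_forall_eq _ hν]

end MeasurePreserving

section MulShift

variable {K : Type*}

def mulShift [Semiring K] (B : K[X]) : (ℕ → K) →+ (ℕ → K) where
  toFun a i := ∑ j ∈ Finset.range (B.natDegree + 1), B.coeff j * a (i + j)
  map_zero' := by ext; simp
  map_add' a b := by ext; simp [mul_add, Finset.sum_add_distrib]

lemma mulShift_apply [Semiring K] (B : K[X]) (a : ℕ → K) (i : ℕ) :
    mulShift B a i = ∑ j ∈ Finset.range (B.natDegree + 1), B.coeff j * a (i + j) := rfl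

lemma measurable_mulShift [Semiring K] [MeasurableSpace K] [MeasurableAdd₂ K] [MeasurableMul K]
    (B : K[X]) : Measurable (mulShift B) :=
  measurable_pi_lambda _ fun i => by
    simp only [mulShift_apply]
    exact Finset.measurable_sum _ fun _ _ => (measurable_pi_apply _).const_mul _

def mulShiftPreimage [Field K] (B : K[X]) (c : ℕ → K) : ℕ → K
  | k =>
    if k < B.natDegree then 0
    else B.leadingCoeff⁻¹ * (c (k - B.natDegree) -
      ∑ j : Fin B.natDegree, B.coeff j * mulShiftPreimage B c (k - B.natDegree + j))
  decreasing_by have := j.2; omega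

lemma mulShift_mulShiftPreimage [Field K] {B : K[X]} (hB : B ≠ 0) (c : ℕ → K) :
    mulShift B (mulShiftPreimage B c) = c := by
  ext i
  have hlast : B.leadingCoeff * mulShiftPreimage B c (i + B.natDegree) =
      c i - ∑ j ∈ Finset.range B.natDegree, B.coeff j * mulShiftPreimage B c (i + j) := by
    rw [mulShiftPreimage, if_neg (by omega), ← mul_assoc,
      mul_inv_cancel₀ (leadingCoeff_ne_zero.2 hB), one_mul, Nat.add_sub_cancel,
      Fin.sum_univ_eq_sum_range (fun j => B.coeff j * mulShiftPreimage B c (i + j))]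
  rw [mulShift_apply, Finset.sum_range_succ, coeff_natDegree, hlast, add_sub_cancel]

lemma mulShift_surjective [Field K] {B : K[X]} (hB : B ≠ 0) :
    Function.Surjective (mulShift B) :=
  fun c => ⟨mulShiftPreimage B c, mulShift_mulShiftPreimage hB c⟩

end MulShift

section LaurentSeries

variable {p : ℕ} [Fact p.Prime]

lemma coeff_P2L_mul_toLS (B : (ZMod p)[X]) (a : ℕ → ZMod p) (i : ℕ) :
    (P2L p B * toLS p a).coeff ((i : ℤ) + 1) = mulShift B a i := by
  have hterm : ∀ j : ℕ, (algebraMap (ZMod p) (LS p) (B.coeff j) * Xls p ^ j * toLS p a).coeff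
      ((i : ℤ) + 1) = B.coeff j * a (i + j) := fun j => by
    have hXj : Xls p ^ j = HahnSeries.single (-(j : ℤ)) (1 : ZMod p) := by
      simp [Xls, HahnSeries.single_pow]
    have hij : ((i : ℤ) + 1 + j - 1).toNat = i + j := by omega
    have hc : algebraMap (ZMod p) (LS p) (B.coeff j) = HahnSeries.single 0 (B.coeff j) := by
      simp [HahnSeries.algebraMap_apply']
    rw [hc, mul_assoc, HahnSeries.coeff_single_zero_mul, hXj,
      ← add_neg_cancel_right ((i : ℤ) + 1) (j : ℤ), HahnSeries.coeff_single_mul_add, one_mul]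
    simp only [toLS, dif_pos (by omega : (1 : ℤ) ≤ i + 1 + j), hij]
  simp only [P2L, AlgHom.toRingHom_eq_coe, RingHom.coe_coe, aeval_eq_sum_range, Algebra.smul_def,
    Finset.sum_mul, HahnSeries.coeff_sum, hterm, mulShift_apply]

end LaurentSeries

open MeasureTheory in
/-- Under the Haar (uniform product) measure on `H ≅ Π_{i≥1} F_p`,
the map `L ↦ {B·L}` (in coordinates: `a ↦` coefficients of the fractional part of
`B(X)·(∑_{i≥1} a_{i-1} X^{-i})`) is measure preserving, for any nonzero `B ∈ F_p[X]`. -/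
theorem statement8 (p : ℕ) [Fact p.Prime]
    (μ : Measure (ℕ → ZMod p)) [IsProbabilityMeasure μ]
    (hμ : ∀ (m : ℕ) (v : Fin m → ZMod p),
      μ {a | ∀ i : Fin m, a (i : ℕ) = v i} = ((p : ℝ≥0∞))⁻¹ ^ m)
    (B : Polynomial (ZMod p)) (hB : B ≠ 0) :
    MeasurePreserving
      (fun a : ℕ → ZMod p => fun i : ℕ => (P2L p B * toLS p a).coeff ((i : ℤ) + 1))
      μ μ := by
  have hf : (fun a : ℕ → ZMod p => fun i : ℕ => (P2L p B * toLS p a).coeff ((i : ℤ) + 1)) =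
      mulShift B := funext fun a => funext (coeff_P2L_mul_toLS B a)
  rw [hf]
  exact measurePreserving_of_surjective μ (fun m v w => (hμ m v).trans (hμ m w).symm)
    (mulShift B) (mulShift_surjective hB) (measurable_mulShift B)

end KH
end
end

section
/- Let p be prime and let b_1(X), ..., b_t(X) ∈ F_p[X] be monic nonconstant pairwise coprime polynomials with deg(b_j) = e_j. Let (y_n)_{n≥0} be the Halton sequence in bases b_1(X), ..., b_t(X). Then for nonnegative integers d_1, ..., d_t and 0 ≤ a_j < p^{e_j d_j}, the point y_n lies in the interval Π_{j=1}^t [a_j / p^{e_j d_j}, (a_j+1)/p^{e_j d_j}) if and only if n(X) ≡ R(X) (mod Π_{j=1}^t b_j(X)^{d_j}) for a unique residue R(X) of degree less than Σ e_j d_j determined by a_1, ..., a_t. -/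
open scoped Classical ENNReal
open Polynomial

noncomputable section

namespace KH

/-!
The coordinate `vdc p b n` is the number whose base-`p ^ deg b` digits are the values at `p`
of the base-`b` digits of `n(X)`. It lies in the `a`-th interval of length `p ^ (-deg b * d)`
iff its first `d` digits are those of `a`, i.e. iff `n(X) ≡ haltonResidue p b d a (mod b ^ d)`.
The Chinese remainder theorem merges these congruences into a single one modulo
`∏ j, b j ^ d j`; reducing the residue gives the existence, and since every polynomial is some
`n(X)` the reduced residue is unique.
-/

open Finset
open scoped Function

namespace Nat

variable {q : ℕ}

theorem sum_mul_pow_lt (hq : 0 < q) {v : ℕ → ℕ} :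
    ∀ {k : ℕ}, (∀ i < k, v i < q) → ∑ i ∈ range k, v i * q ^ i < q ^ k
  | 0, _ => by simp
  | k + 1, hv => by
    have ih := sum_mul_pow_lt hq (k := k) fun i hi => hv i (by omega)
    have hk : v k + 1 ≤ q := hv k (by omega)
    rw [sum_range_succ, pow_succ]
    calc _ < (v k + 1) * q ^ k := by rw [add_mul, one_mul]; omega
      _ ≤ q ^ k * q := by rw [mul_comm]; exact Nat.mul_le_mul_left _ hk

theorem sum_mul_pow_div_pow_mod (hq : 0 < q) :
    ∀ {k : ℕ} {v : ℕ → ℕ}, (∀ i < k, v i < q) → ∀ {j : ℕ}, j < k →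
      (∑ i ∈ range k, v i * q ^ i) / q ^ j % q = v j
  | k + 1, v, hv, j, hj => by
    have hsplit : ∑ i ∈ range (k + 1), v i * q ^ i =
        v 0 + q * ∑ i ∈ range k, v (i + 1) * q ^ i := by
      rw [sum_range_succ', mul_sum, add_comm]
      simp only [pow_zero, mul_one, pow_succ]
      congr 1
      exact sum_congr rfl fun i _ => by ring
    have hv0 : v 0 < q := hv 0 (by omega)
    rw [hsplit]
    rcases j with _ | j
    · rw [pow_zero, Nat.div_one, Nat.add_mul_mod_self_left, Nat.mod_eq_of_lt hv0]
    · rw [pow_succ', ← Nat.div_div_eq_div_mul, Nat.add_mul_div_left _ _ hq, Nat.div_eq_of_lt hv0,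
        zero_add]
      exact sum_mul_pow_div_pow_mod hq (fun i hi => hv (i + 1) (by omega)) (by omega)

theorem sum_div_pow_mod_mul_pow (m : ℕ) :
    ∀ k, ∑ i ∈ range k, m / q ^ i % q * q ^ i = m % q ^ k
  | 0 => by simp [Nat.mod_one]
  | k + 1 => by rw [sum_range_succ, sum_div_pow_mod_mul_pow m k, pow_succ, Nat.mod_mul]; ring

theorem eq_iff_forall_div_pow_mod_eq {k m m' : ℕ} (hm : m < q ^ k) (hm' : m' < q ^ k) :
    m = m' ↔ ∀ i < k, m / q ^ i % q = m' / q ^ i % q := by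
  refine ⟨fun h _ _ => h ▸ rfl, fun h => ?_⟩
  rw [← Nat.mod_eq_of_lt hm, ← Nat.mod_eq_of_lt hm', ← sum_div_pow_mod_mul_pow,
    ← sum_div_pow_mod_mul_pow]
  exact sum_congr rfl fun i hi => by rw [h i (mem_range.1 hi)]

end Nat

theorem div_pow_le_sum_div_pow_lt_iff {q : ℕ} (hq : 0 < q) {c : ℕ → ℕ} (hc : ∀ i, c i < q)
    {a d M : ℕ} (ha : a < q ^ d) (hdM : d ≤ M) :
    ((a : ℝ) / q ^ d ≤ ∑ i ∈ range M, (c i : ℝ) / q ^ (i + 1) ∧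
        ∑ i ∈ range M, (c i : ℝ) / q ^ (i + 1) < (a + 1) / q ^ d) ↔
      ∀ i < d, c i = a / q ^ (d - 1 - i) % q := by
  -- `N = q ^ M * x` for the sum `x`; the box condition then says `N / q ^ (M - d) = a`.
  set N := ∑ j ∈ range M, c (M - 1 - j) * q ^ j
  have hNlt : N < q ^ M := Nat.sum_mul_pow_lt hq fun i _ => hc _
  have hsum : ∑ i ∈ range M, (c i : ℝ) / q ^ (i + 1) = N / q ^ M := by
    rw [← sum_range_reflect]
    push_cast [N]
    rw [sum_div]
    refine sum_congr rfl fun j hj => ?_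
    have hj := mem_range.1 hj
    rw [div_eq_div_iff (by positivity) (by positivity), mul_assoc, ← pow_add]
    congr 2
    omega
  obtain ⟨l, rfl⟩ : ∃ l, M = l + d := ⟨M - d, by omega⟩
  have hbox : ((a : ℝ) / q ^ d ≤ N / q ^ (l + d) ∧
      (N : ℝ) / q ^ (l + d) < (a + 1) / q ^ d) ↔ N / q ^ l = a := by
    have hql : 0 < q ^ l := by positivity
    rw [div_le_div_iff₀ (by positivity) (by positivity),
      div_lt_div_iff₀ (by positivity) (by positivity), pow_add, ← mul_assoc, ← mul_assoc,
      mul_le_mul_iff_of_pos_right (by positivity), mul_lt_mul_iff_of_pos_right (by positivity),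
      show N / q ^ l = a ↔ a ≤ N / q ^ l ∧ N / q ^ l < a + 1 by omega,
      Nat.le_div_iff_mul_le hql, Nat.div_lt_iff_lt_mul hql]
    norm_cast
  have hdigit : ∀ k < d, N / q ^ l / q ^ k % q = c (d - 1 - k) := by
    intro k hk
    rw [Nat.div_div_eq_div_mul, ← pow_add,
      Nat.sum_mul_pow_div_pow_mod hq (fun i _ => hc _) (by omega)]
    congr 1
    omega
  have hNl : N / q ^ l < q ^ d := by
    rw [Nat.div_lt_iff_lt_mul (by positivity), ← pow_add, add_comm]; exact hNlt
  rw [hsum, hbox, Nat.eq_iff_forall_div_pow_mod_eq hNl ha]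
  constructor
  · intro h i hi
    have := h (d - 1 - i) (by omega)
    rwa [hdigit _ (by omega), show d - 1 - (d - 1 - i) = i by omega] at this
  · intro h k hk
    rw [hdigit k hk, h _ (by omega), show d - 1 - (d - 1 - k) = k by omega]

namespace Polynomial

variable {R : Type*} [CommRing R]

theorem divByMonic_mul {g h : R[X]} (hg : g.Monic) (hh : h.Monic) (f : R[X]) :
    f /ₘ (g * h) = f /ₘ g /ₘ h := by
  nontriviality R
  refine (div_modByMonic_unique _ (f %ₘ g + g * (f /ₘ g %ₘ h)) (hg.mul hh) ⟨?_, ?_⟩).1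
  · calc _ = f %ₘ g + g * (f /ₘ g %ₘ h + h * (f /ₘ g /ₘ h)) := by ring
      _ = f := by rw [modByMonic_add_div, modByMonic_add_div]
  · have hgh : (g * h).degree = g.degree + h.degree := hh.degree_mul
    refine (degree_add_le _ _).trans_lt (max_lt ?_ ?_)
    · calc (f %ₘ g).degree < g.degree := degree_modByMonic_lt _ hg
        _ ≤ (g * h).degree := by
          rw [hgh, degree_eq_natDegree hg.ne_zero, degree_eq_natDegree hh.ne_zero]
          exact_mod_cast Nat.le_add_right _ _
    · rw [hgh, mul_comm, hg.degree_mul, add_comm]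
      have := degree_modByMonic_lt (f /ₘ g) hh
      rw [degree_eq_natDegree hg.ne_zero] at *
      exact WithBot.add_lt_add_left WithBot.coe_ne_bot this

theorem pow_succ_dvd_add_mul_iff [IsDomain R] {b u v : R[X]} (hb : b.Monic)
    (hu : u.degree < b.degree) (d : ℕ) : b ^ (d + 1) ∣ u + b * v ↔ u = 0 ∧ b ^ d ∣ v := by
  refine ⟨fun h => ?_, fun ⟨hu0, hv⟩ => ?_⟩
  · have hbu : b ∣ u :=
      (dvd_add_left (dvd_mul_right b v)).1 ((dvd_pow_self b d.succ_ne_zero).trans h)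
    obtain rfl := eq_zero_of_dvd_of_degree_lt hbu hu
    rw [zero_add, pow_succ'] at h
    exact ⟨rfl, (mul_dvd_mul_iff_left hb.ne_zero).1 h⟩
  · rw [hu0, zero_add, pow_succ']
    exact mul_dvd_mul_left b hv

theorem pow_dvd_sub_sum_mul_pow_iff [IsDomain R] {b : R[X]} (hb : b.Monic) :
    ∀ (d : ℕ) (f : R[X]) {r : ℕ → R[X]}, (∀ i, (r i).degree < b.degree) →
      (b ^ d ∣ f - ∑ i ∈ range d, r i * b ^ i ↔ ∀ i < d, f /ₘ b ^ i %ₘ b = r i)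
  | 0, f, r, _ => by simp
  | d + 1, f, r, hr => by
    have hsplit : f - ∑ i ∈ range (d + 1), r i * b ^ i =
        (f %ₘ b - r 0) + b * (f /ₘ b - ∑ i ∈ range d, r (i + 1) * b ^ i) := by
      rw [sum_range_succ', mul_sub, mul_sum]
      simp only [pow_succ', pow_zero, mul_one, mul_left_comm b]
      linear_combination (modByMonic_add_div f b).symm
    have hdeg : (f %ₘ b - r 0).degree < b.degree :=
      (degree_sub_le _ _).trans_lt (max_lt (degree_modByMonic_lt _ hb) (hr 0))
    rw [hsplit, pow_succ_dvd_add_mul_iff hb hdeg, sub_eq_zero,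
      pow_dvd_sub_sum_mul_pow_iff hb d _ fun i => hr (i + 1), Nat.forall_lt_succ_left]
    simp only [pow_zero, divByMonic_one, pow_succ', divByMonic_mul hb (hb.pow _)]

theorem existsUnique_degree_lt_forall_iff_dvd_sub [Nontrivial R] {α : Type*} {P : R[X]}
    (hP : P.Monic) {φ : α → R[X]} (hφ : Function.Surjective φ) {Q : α → Prop} {r : R[X]}
    (hr : ∀ x, Q x ↔ P ∣ φ x - r) :
    ∃! R₀ : R[X], R₀.degree < P.degree ∧ ∀ x, Q x ↔ P ∣ φ x - R₀ := by
  have hmod : P ∣ r - r %ₘ P :=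
    ⟨r /ₘ P, by linear_combination (modByMonic_add_div r P).symm⟩
  refine ⟨r %ₘ P, ⟨degree_modByMonic_lt _ hP, fun x => ?_⟩,
    fun R₀ ⟨hR₀, hQ⟩ => ?_⟩
  · rw [hr, ← dvd_sub_left hmod (b := φ x - r %ₘ P), sub_sub_sub_cancel_right]
  · obtain ⟨x, hx⟩ := hφ R₀
    have h : P ∣ R₀ - r := by rw [← hx, ← hr, hQ, hx, sub_self]; exact dvd_zero _
    rw [← (modByMonic_eq_self_iff hP).2 hR₀, modByMonic_eq_of_dvd_sub hP h]

end Polynomial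

theorem exists_forall_dvd_sub_iff_prod_dvd_sub {ι R : Type*} [CommRing R] [Fintype ι]
    {m : ι → R} (hm : Pairwise (IsCoprime on m)) (x : ι → R) :
    ∃ r, ∀ f, (∀ i, m i ∣ f - x i) ↔ (∏ i, m i) ∣ f - r := by
  obtain ⟨r, hr⟩ := Ideal.exists_forall_sub_mem_ideal (I := fun i => Ideal.span {m i})
    (fun i j h => (Ideal.isCoprime_span_singleton_iff _ _).2 (hm h)) x
  simp only [Ideal.mem_span_singleton] at hr
  refine ⟨r, fun f => ⟨fun h => prod_dvd_of_coprime (hm.set_pairwise _) fun i _ => ?_,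
    fun h i => ?_⟩⟩
  · rw [← sub_sub_sub_cancel_right f r (x i)]
    exact dvd_sub (h i) (hr i)
  · rw [← sub_add_sub_cancel f r (x i)]
    exact dvd_add ((dvd_prod_of_mem _ (mem_univ i)).trans h) (hr i)

section Digits

variable {p : ℕ} [hp : Fact p.Prime]

theorem nPoly_coeff (n i : ℕ) : (nPoly p n).coeff i = (n / p ^ i % p : ℕ) := by
  rw [nPoly, finsetSum_coeff]
  simp only [coeff_C_mul, coeff_X_pow, mul_ite, mul_one, mul_zero, sum_ite_eq, mem_range]
  split_ifs with h
  · rfl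
  · rw [Nat.div_eq_of_lt ((show n < i by omega).trans (Nat.lt_pow_self hp.out.one_lt)),
      Nat.zero_mod, Nat.cast_zero]

theorem nPoly_coeff_eq_zero {n i : ℕ} (h : n < p ^ i) : (nPoly p n).coeff i = 0 := by
  rw [nPoly_coeff, Nat.div_eq_of_lt h, Nat.zero_mod, Nat.cast_zero]

theorem degree_nPoly_lt_s10 {n e : ℕ} (h : n < p ^ e) : (nPoly p n).degree < e :=
  (degree_lt_iff_coeff_zero _ _).2 fun _ hi =>
    nPoly_coeff_eq_zero (h.trans_le (Nat.pow_le_pow_right hp.out.pos hi))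

theorem polyEvalNat_eq_sum_range {f : (ZMod p)[X]} {K : ℕ} (hK : f.natDegree < K) :
    polyEvalNat p f = ∑ i ∈ range K, (f.coeff i).val * p ^ i := by
  refine sum_subset (range_subset_range.2 hK) fun i _ hi => ?_
  rw [coeff_eq_zero_of_natDegree_lt (by simpa using hi), ZMod.val_zero, zero_mul]

theorem polyEvalNat_lt {f : (ZMod p)[X]} {e : ℕ} (hf : f.degree < e) :
    polyEvalNat p f < p ^ e := by
  rcases eq_or_ne f 0 with rfl | hf0
  · simpa [polyEvalNat] using pow_pos hp.out.pos e
  rw [polyEvalNat_eq_sum_range ((natDegree_lt_iff_degree_lt hf0).2 hf)]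
  exact Nat.sum_mul_pow_lt hp.out.pos fun i _ => ZMod.val_lt _

theorem nPoly_polyEvalNat (f : (ZMod p)[X]) : nPoly p (polyEvalNat p f) = f := by
  ext i
  rw [nPoly_coeff, polyEvalNat_eq_sum_range (K := max i f.natDegree + 1) (by omega),
    Nat.sum_mul_pow_div_pow_mod hp.out.pos (fun j _ => ZMod.val_lt _) (by omega),
    ZMod.natCast_zmod_val]

theorem polyEvalNat_nPoly (n : ℕ) : polyEvalNat p (nPoly p n) = n := by
  have hn : n < p ^ (n + 1) := (Nat.lt_succ_self n).trans (Nat.lt_pow_self hp.out.one_lt)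
  have hdeg : (nPoly p n).natDegree < n + 1 :=
    Nat.lt_succ_of_le <| natDegree_le_iff_coeff_eq_zero.2 fun _ hN =>
      nPoly_coeff_eq_zero (hN.trans (Nat.lt_pow_self hp.out.one_lt))
  simp_rw [polyEvalNat_eq_sum_range hdeg, nPoly_coeff,
    ZMod.val_natCast_of_lt (Nat.mod_lt _ hp.out.pos)]
  rw [Nat.sum_div_pow_mod_mul_pow, Nat.mod_eq_of_lt hn]

theorem polyEvalNat_eq_iff {f : (ZMod p)[X]} {n : ℕ} : polyEvalNat p f = n ↔ f = nPoly p n :=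
  ⟨fun h => h ▸ (nPoly_polyEvalNat f).symm, fun h => h ▸ polyEvalNat_nPoly n⟩

theorem nPoly_surjective : Function.Surjective (nPoly p) :=
  Function.LeftInverse.surjective nPoly_polyEvalNat

end Digits

/-- The residue `R` of a single coordinate: its base-`b` digits are the base-`p ^ deg b` digits
of `a`, the most significant one first. -/
def haltonResidue (p : ℕ) (b : (ZMod p)[X]) (d a : ℕ) : (ZMod p)[X] :=
  ∑ i ∈ range d, nPoly p (a / (p ^ b.natDegree) ^ (d - 1 - i) % p ^ b.natDegree) * b ^ i

section Halton

variable {p : ℕ} [hp : Fact p.Prime] {b : (ZMod p)[X]}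

theorem haltonDigit_eq_zero_of_lt (hb : b.Monic) (he : 1 ≤ b.natDegree) {n i : ℕ} (hi : n < i) :
    haltonDigit p b n i = 0 := by
  have hdeg : (nPoly p n).degree < (b ^ i).degree := by
    rw [degree_eq_natDegree (hb.pow i).ne_zero, hb.natDegree_pow]
    exact (degree_nPoly_lt_s10 (hi.trans (Nat.lt_pow_self hp.out.one_lt))).trans_le
      (by exact_mod_cast Nat.le_mul_of_pos_right i he)
  rw [haltonDigit, (divByMonic_eq_zero_iff (hb.pow i)).2 hdeg, zero_modByMonic]

theorem vdc_eq_sum_range (hb : b.Monic) (he : 1 ≤ b.natDegree) {n M : ℕ} (hM : n < M) :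
    vdc p b n = ∑ i ∈ range M,
      (polyEvalNat p (haltonDigit p b n i) : ℝ) / ((p ^ b.natDegree : ℕ) : ℝ) ^ (i + 1) := by
  rw [vdc, tsum_eq_sum (s := range M) fun i hi => ?_]
  · push_cast
    simp_rw [pow_mul]
  · rw [haltonDigit_eq_zero_of_lt hb he (by rw [mem_range] at hi; omega)]
    simp [polyEvalNat]

theorem vdc_mem_Ico_iff (hb : b.Monic) (he : 1 ≤ b.natDegree) {d a : ℕ}
    (ha : a < p ^ (b.natDegree * d)) (n : ℕ) :
    ((a : ℝ) / (p : ℝ) ^ (b.natDegree * d) ≤ vdc p b n ∧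
        vdc p b n < ((a : ℝ) + 1) / (p : ℝ) ^ (b.natDegree * d)) ↔
      b ^ d ∣ nPoly p n - haltonResidue p b d a := by
  set q := p ^ b.natDegree
  have hq : 0 < q := pow_pos hp.out.pos _
  have hbdeg : b.degree = b.natDegree := degree_eq_natDegree hb.ne_zero
  have hpow : (p : ℝ) ^ (b.natDegree * d) = (q : ℝ) ^ d := by push_cast [q]; rw [pow_mul]
  rw [hpow, vdc_eq_sum_range hb he (M := n + 1 + d) (by omega),
    div_pow_le_sum_div_pow_lt_iff hq
      (fun i => polyEvalNat_lt (hbdeg ▸ degree_modByMonic_lt _ hb)) (by rwa [← pow_mul])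
      (by omega),
    haltonResidue, Polynomial.pow_dvd_sub_sum_mul_pow_iff hb _ _ fun i =>
      hbdeg ▸ degree_nPoly_lt_s10 (Nat.mod_lt _ hq)]
  simp_rw [polyEvalNat_eq_iff]
  rfl

end Halton

/-- For the Halton sequence in monic nonconstant pairwise coprime
polynomial bases `b_1, …, b_t` with `deg b_j = e_j`: the point `y_n` lies in
`∏_j [a_j/p^{e_j d_j}, (a_j+1)/p^{e_j d_j})` if and only if
`n(X) ≡ R(X) (mod ∏_j b_j^{d_j})` for a unique residue `R` of degree `< ∑ e_j d_j`
determined by the `a_j`. -/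
theorem statement10 (p : ℕ) [Fact p.Prime] (t : ℕ)
    (b : Fin t → Polynomial (ZMod p))
    (hmonic : ∀ j, (b j).Monic) (hnc : ∀ j, 1 ≤ (b j).natDegree)
    (hcop : ∀ j j', j ≠ j' → IsCoprime (b j) (b j'))
    (d : Fin t → ℕ) (a : Fin t → ℕ) (ha : ∀ j, a j < p ^ ((b j).natDegree * d j)) :
    ∃! R : Polynomial (ZMod p),
      R.degree < ((∑ j, (b j).natDegree * d j : ℕ) : ℕ) ∧
      ∀ n : ℕ,
        ((∀ j, (a j : ℝ) / (p : ℝ) ^ ((b j).natDegree * d j) ≤ vdc p (b j) n ∧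
            vdc p (b j) n < ((a j : ℝ) + 1) / (p : ℝ) ^ ((b j).natDegree * d j))
          ↔ (∏ j, (b j) ^ (d j)) ∣ (nPoly p n - R)) := by
  have hP : (∏ j, b j ^ d j).Monic := monic_prod_of_monic _ _ fun j _ => (hmonic j).pow _
  have hPdeg :
      (∏ j, b j ^ d j).degree = ((∑ j, (b j).natDegree * d j : ℕ) : WithBot ℕ) := by
    rw [degree_eq_natDegree hP.ne_zero, natDegree_prod_of_monic _ _ fun j _ => (hmonic j).pow _]
    simp_rw [(hmonic _).natDegree_pow, mul_comm]
  obtain ⟨r, hr⟩ := exists_forall_dvd_sub_iff_prod_dvd_sub (fun j j' h => (hcop j j' h).pow)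
    fun j => haltonResidue p (b j) (d j) (a j)
  rw [← hPdeg]
  exact Polynomial.existsUnique_degree_lt_forall_iff_dvd_sub hP nPoly_surjective fun n =>
    (forall_congr' fun j => vdc_mem_Ico_iff (hmonic j) (hnc j) (ha j) n).trans (hr _)

end KH
end
end
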